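/- arXiv:1511.06468 — 10 statements merged into one kernel-verified Lean document; each statement's English description precedes it below -/
import Mathlib

section
/- Let ε ∈ (0, 1/2] and μ = ε/(4 log(nm/ε)). Suppose x* ∈ ℝⁿ satisfies x* ≥ 0, Ax* ≤ 1, and 1ᵀx* = opt, and suppose opt ≥ 1. Let u* = (1 − ε/2)x*. Then f_μ(u*) ≤ −(1 − ε)·opt. -/
/-!
Every constraint of `A x* ≤ 1` has slack at least `ε/2` at `u* = (1 - ε/2) x*`, so each of the
`m` exponential penalties is at most `exp (-(ε/2)/μ) = (ε/(nm))²`. The total penalty is then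
`μ m (ε/(nm))² ≤ ε/2 ≤ (ε/2) opt`, which is exactly the gap between `-(1 - ε/2) opt` and
`-(1 - ε) opt`.
-/

noncomputable def fmu {m n : ℕ} (A : Matrix (Fin m) (Fin n) ℝ) (μ : ℝ) (x : Fin n → ℝ) : ℝ :=
  -(∑ i, x i) + μ * ∑ j, Real.exp ((1 / μ) * (A.mulVec x j - 1))

theorem fmu_le_of_forall_mulVec_le {m n : ℕ} (A : Matrix (Fin m) (Fin n) ℝ) {μ δ : ℝ}
    (hμ : 0 < μ) {x : Fin n → ℝ} (hx : ∀ j, A.mulVec x j ≤ 1 - δ) :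
    fmu A μ x ≤ -(∑ i, x i) + μ * m * Real.exp (-δ / μ) := by
  have hterm : ∀ j, Real.exp ((1 / μ) * (A.mulVec x j - 1)) ≤ Real.exp (-δ / μ) := fun j => by
    rw [Real.exp_le_exp, one_div_mul_eq_div]
    exact div_le_div_of_nonneg_right (by linarith [hx j]) hμ.le
  have hsum : ∑ j, Real.exp ((1 / μ) * (A.mulVec x j - 1)) ≤ m * Real.exp (-δ / μ) := by
    simpa using Finset.sum_le_card_nsmul Finset.univ _ _ fun j _ => hterm j
  rw [fmu, mul_assoc]
  gcongr

theorem exp_neg_two_mul_log {t : ℝ} (ht : 0 < t) : Real.exp (-(2 * Real.log t)) = (t ^ 2)⁻¹ := by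
  rw [Real.exp_neg, show 2 * Real.log t = Real.log (t ^ 2) by rw [Real.log_pow]; norm_num,
    Real.exp_log (pow_pos ht 2)]

theorem one_half_lt_log_mul_div {m n : ℕ} (hm : 0 < m) (hn : 0 < n) {ε : ℝ}
    (hε : ε ∈ Set.Ioc (0 : ℝ) (1 / 2)) : 1 / 2 < Real.log ((n : ℝ) * m / ε) := by
  obtain ⟨hε0, hε2⟩ := hε
  have hn1 : (1 : ℝ) ≤ n := by exact_mod_cast hn
  have hm1 : (1 : ℝ) ≤ m := by exact_mod_cast hm
  have h2 : 2 ≤ (n : ℝ) * m / ε := by rw [le_div_iff₀ hε0]; nlinarith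
  linarith [Real.log_le_log (by norm_num) h2, Real.log_two_gt_d9]

/-- Here `(ε/2)/μ = 2 log (nm/ε)`, so the left side equals `ε³ / (4 n² m log (nm/ε))`. -/
theorem mul_exp_neg_half_div_le {m n : ℕ} (hm : 0 < m) (hn : 0 < n) {ε μ : ℝ}
    (hε : ε ∈ Set.Ioc (0 : ℝ) (1 / 2)) (hμ : μ = ε / (4 * Real.log ((n : ℝ) * m / ε))) :
    μ * m * Real.exp (-(ε / 2) / μ) ≤ ε / 2 := by
  obtain ⟨hε0, hε2⟩ := hε
  have hL := one_half_lt_log_mul_div hm hn ⟨hε0, hε2⟩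
  have hexp : Real.exp (-(ε / 2) / μ) = (((n : ℝ) * m / ε) ^ 2)⁻¹ := by
    rw [← exp_neg_two_mul_log (by positivity), hμ]
    congr 1
    field_simp
    norm_num
  have hnm : (1 : ℝ) ≤ n ^ 2 * m := one_le_mul_of_one_le_of_one_le
    (one_le_pow₀ (by exact_mod_cast hn)) (by exact_mod_cast hm)
  calc μ * m * Real.exp (-(ε / 2) / μ)
      = ε ^ 3 / (4 * Real.log (n * m / ε) * (n ^ 2 * m)) := by rw [hexp, hμ]; field_simp
    _ ≤ ε / 2 := by
      rw [div_le_div_iff₀ (by positivity) (by norm_num)]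
      nlinarith [mul_le_mul hL.le hnm (by norm_num) (by linarith), sq_nonneg ε]

theorem fmu_at_ustar_general (m n : ℕ) (hm : 0 < m) (hn : 0 < n)
    (A : Matrix (Fin m) (Fin n) ℝ)
    (ε : ℝ) (hε : ε ∈ Set.Ioc (0 : ℝ) (1 / 2))
    (μ : ℝ) (hμ : μ = ε / (4 * Real.log ((n : ℝ) * m / ε)))
    (opt : ℝ)
    (hopt1 : 1 ≤ opt)
    (xstar : Fin n → ℝ) (hx2 : ∀ j, A.mulVec xstar j ≤ 1)
    (hx3 : ∑ i, xstar i = opt) :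
    fmu A μ (fun i => (1 - ε / 2) * xstar i) ≤ -(1 - ε) * opt := by
  have hμ0 : 0 < μ := by
    rw [hμ]
    exact div_pos hε.1 (by linarith [one_half_lt_log_mul_div hm hn hε])
  have hslack : ∀ j, A.mulVec (fun i => (1 - ε / 2) * xstar i) j ≤ 1 - ε / 2 := fun j => by
    change A.mulVec ((1 - ε / 2) • xstar) j ≤ _
    rw [Matrix.mulVec_smul, Pi.smul_apply, smul_eq_mul]
    nlinarith [hx2 j, hε.2]
  calc fmu A μ (fun i => (1 - ε / 2) * xstar i)
      ≤ -(∑ i, (1 - ε / 2) * xstar i) + μ * m * Real.exp (-(ε / 2) / μ) :=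
        fmu_le_of_forall_mulVec_le A hμ0 hslack
    _ ≤ -((1 - ε / 2) * opt) + ε / 2 := by
        rw [← Finset.mul_sum, hx3]
        linarith [mul_exp_neg_half_div_le hm hn hε hμ]
    _ ≤ -(1 - ε) * opt := by nlinarith [hε.1]

/-- With `ε ∈ (0,1/2]`, `μ = ε/(4 log(nm/ε))`, an optimal solution `x*` of the
packing LP with value `opt ≥ 1`, and `u* = (1 − ε/2)x*`, one has `f_μ(u*) ≤ −(1 − ε)·opt`. -/
theorem fmu_at_ustar (m n : ℕ) (hm : 0 < m) (hn : 0 < n)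
    (A : Matrix (Fin m) (Fin n) ℝ) (hA : ∀ j i, 0 ≤ A j i)
    (ε : ℝ) (hε : ε ∈ Set.Ioc (0 : ℝ) (1 / 2))
    (μ : ℝ) (hμ : μ = ε / (4 * Real.log ((n : ℝ) * m / ε)))
    (opt : ℝ)
    (hopt : IsLUB {v : ℝ | ∃ x : Fin n → ℝ,
        (∀ i, 0 ≤ x i) ∧ (∀ j, A.mulVec x j ≤ 1) ∧ v = ∑ i, x i} opt)
    (hopt1 : 1 ≤ opt)
    (xstar : Fin n → ℝ) (hx1 : ∀ i, 0 ≤ xstar i) (hx2 : ∀ j, A.mulVec xstar j ≤ 1)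
    (hx3 : ∑ i, xstar i = opt) :
    fmu A μ (fun i => (1 - ε / 2) * xstar i) ≤ -(1 - ε) * opt :=
  fmu_at_ustar_general m n hm hn A ε hε μ hμ opt hopt1 xstar hx2 hx3
end

section
/- Let ε ∈ (0, 1/2] and μ = ε/(4 log(nm/ε)), and suppose 1 ≤ opt ≤ n. Then for every x ∈ ℝⁿ with x ≥ 0, f_μ(x) ≥ −(1 + ε)·opt. -/
open Real Finset Matrix

lemma le_mul_exp_div {μ : ℝ} (hμ : 0 < μ) (y : ℝ) : y ≤ μ * exp (y / μ) := by
  have h := mul_le_mul_of_nonneg_left (add_one_le_exp (y / μ)) hμ.le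
  rw [mul_add, mul_div_cancel₀ y hμ.ne'] at h
  linarith

section Packing

variable {ι κ : Type*} [Fintype κ] {A : Matrix ι κ ℝ}

lemma mulVec_nonneg_of_nonneg (hA : ∀ j i, 0 ≤ A j i) {x : κ → ℝ} (hx : ∀ i, 0 ≤ x i)
    (j : ι) : 0 ≤ (A *ᵥ x) j :=
  sum_nonneg fun i _ => mul_nonneg (hA j i) (hx i)

variable [Fintype ι] {opt : ℝ}

lemma exists_sum_le_mul_mulVec [Nonempty ι] (hA : ∀ j i, 0 ≤ A j i) (hopt : 0 < opt)
    (hub : ∀ y : κ → ℝ, (∀ i, 0 ≤ y i) → (∀ j, (A *ᵥ y) j ≤ 1) → ∑ i, y i ≤ opt)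
    {x : κ → ℝ} (hx : ∀ i, 0 ≤ x i) : ∃ j, ∑ i, x i ≤ opt * (A *ᵥ x) j := by
  obtain ⟨j₀, -, hj₀⟩ := exists_max_image univ (fun j => (A *ᵥ x) j) univ_nonempty
  refine ⟨j₀, ?_⟩
  rw [← div_le_iff₀' hopt]
  -- scaling by every `d` above the largest load also covers the case where that load is `0`
  refine le_of_forall_gt_imp_ge_of_dense fun d hd => ?_
  have hd0 : 0 < d := (mulVec_nonneg_of_nonneg hA hx j₀).trans_lt hd
  have hfeas : ∀ j, (A *ᵥ (d⁻¹ • x)) j ≤ 1 := fun j => by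
    rw [mulVec_smul, Pi.smul_apply, smul_eq_mul, inv_mul_le_one₀ hd0]
    exact (hj₀ j (mem_univ j)).trans hd.le
  have hscaled := hub (d⁻¹ • x) (fun i => mul_nonneg (inv_nonneg.2 hd0.le) (hx i)) hfeas
  simp only [Pi.smul_apply, smul_eq_mul, ← mul_sum, inv_mul_le_iff₀ hd0] at hscaled
  rwa [div_le_iff₀ hopt]

end Packing

lemma sub_le_mul_exp_of_le_mul {μ ε opt S a : ℝ} (hμ : 0 < μ) (hopt : 0 ≤ opt)
    (hopt_exp : opt ≤ exp (ε / μ)) (hS : S ≤ opt * a) :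
    S - (1 + ε) * opt ≤ μ * exp ((1 / μ) * (a - 1)) :=
  calc S - (1 + ε) * opt ≤ opt * (a - 1 - ε) := by linarith
    _ ≤ opt * (μ * exp ((a - 1 - ε) / μ)) :=
        mul_le_mul_of_nonneg_left (le_mul_exp_div hμ _) hopt
    _ = μ * (opt * exp ((a - 1 - ε) / μ)) := by ring
    _ ≤ μ * (exp (ε / μ) * exp ((a - 1 - ε) / μ)) := by gcongr
    _ = μ * exp ((1 / μ) * (a - 1)) := by
        rw [← exp_add]; congr 2; field_simp; ring

lemma lt_mul_div_of_lt_one {a b ε : ℝ} (ha : 0 < a) (hb : 1 ≤ b) (hε0 : 0 < ε)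
    (hε1 : ε < 1) : a < a * b / ε := by
  rw [lt_div_iff₀ hε0]
  nlinarith

lemma le_exp_four_mul_log {T : ℝ} (hT : 1 ≤ T) : T ≤ exp (4 * log T) := by
  have hlog : 0 ≤ log T := log_nonneg hT
  calc T = exp (log T) := (exp_log (by linarith)).symm
    _ ≤ exp (4 * log T) := exp_le_exp.2 (by linarith)

lemma neg_sum_add_mul_exp_le_fmu {m n : ℕ} (A : Matrix (Fin m) (Fin n) ℝ) {μ : ℝ} (hμ : 0 ≤ μ)
    (x : Fin n → ℝ) (j : Fin m) :
    -(∑ i, x i) + μ * exp ((1 / μ) * ((A *ᵥ x) j - 1)) ≤ fmu A μ x := by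
  unfold fmu
  gcongr
  exact single_le_sum (f := fun j => exp ((1 / μ) * ((A *ᵥ x) j - 1)))
    (fun _ _ => (exp_pos _).le) (mem_univ j)

theorem fmu_lower_bound_general (m n : ℕ) (hm : 0 < m)
    (A : Matrix (Fin m) (Fin n) ℝ) (hA : ∀ j i, 0 ≤ A j i)
    (ε : ℝ) (hε : ε ∈ Set.Ioc (0 : ℝ) (1 / 2))
    (μ : ℝ) (hμ : μ = ε / (4 * Real.log ((n : ℝ) * m / ε)))
    (opt : ℝ)
    (hopt : IsLUB {v : ℝ | ∃ x : Fin n → ℝ,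
        (∀ i, 0 ≤ x i) ∧ (∀ j, A.mulVec x j ≤ 1) ∧ v = ∑ i, x i} opt)
    (hopt1 : 1 ≤ opt) (hoptn : opt ≤ (n : ℝ)) :
    ∀ x : Fin n → ℝ, (∀ i, 0 ≤ x i) → -(1 + ε) * opt ≤ fmu A μ x := by
  intro x hx
  obtain ⟨hε0, hε2⟩ := hε
  have : Nonempty (Fin m) := ⟨⟨0, hm⟩⟩
  have hn_lt : (n : ℝ) < n * m / ε :=
    lt_mul_div_of_lt_one (by linarith) (by exact_mod_cast hm) hε0 (by linarith)
  have hlog : 0 < log ((n : ℝ) * m / ε) := log_pos (by linarith)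
  have hμ0 : 0 < μ := hμ ▸ by positivity
  have hopt_exp : opt ≤ exp (ε / μ) := by
    rw [hμ, div_div_cancel₀ hε0.ne']
    exact hoptn.trans (hn_lt.le.trans (le_exp_four_mul_log (by linarith)))
  obtain ⟨j, hj⟩ := exists_sum_le_mul_mulVec hA (by linarith)
    (fun y hy hAy => hopt.1 ⟨y, hy, hAy, rfl⟩) hx
  have hrow := sub_le_mul_exp_of_le_mul hμ0 (by linarith) hopt_exp hj
  linarith [neg_sum_add_mul_exp_le_fmu A hμ0.le x j]

/-- With `ε ∈ (0,1/2]`, `μ = ε/(4 log(nm/ε))`, and `1 ≤ opt ≤ n`, for every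
`x ≥ 0` one has `f_μ(x) ≥ −(1 + ε)·opt`. -/
theorem fmu_lower_bound (m n : ℕ) (hm : 0 < m) (hn : 0 < n)
    (A : Matrix (Fin m) (Fin n) ℝ) (hA : ∀ j i, 0 ≤ A j i)
    (ε : ℝ) (hε : ε ∈ Set.Ioc (0 : ℝ) (1 / 2))
    (μ : ℝ) (hμ : μ = ε / (4 * Real.log ((n : ℝ) * m / ε)))
    (opt : ℝ)
    (hopt : IsLUB {v : ℝ | ∃ x : Fin n → ℝ,
        (∀ i, 0 ≤ x i) ∧ (∀ j, A.mulVec x j ≤ 1) ∧ v = ∑ i, x i} opt)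
    (hopt1 : 1 ≤ opt) (hoptn : opt ≤ (n : ℝ)) :
    ∀ x : Fin n → ℝ, (∀ i, 0 ≤ x i) → -(1 + ε) * opt ≤ fmu A μ x :=
  fmu_lower_bound_general m n hm A hA ε hε μ hμ opt hopt hopt1 hoptn
end

section
/- Let ε ∈ (0, 1/2] and μ = ε/(4 log(nm/ε)), and suppose the minimum over columns i of ‖A_{:i}‖_∞ equals 1. Let x₀ ∈ ℝⁿ be defined by x₀[i] = (1 − ε/2)/(n·‖A_{:i}‖_∞) for each i. Then f_μ(x₀) ≤ −(1 − ε)/n. -/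
/-- The max entry of column `i` of `A` (i.e. `‖A_{:i}‖_∞` for a nonnegative matrix). -/
noncomputable def colMax {m n : ℕ} (hm : 0 < m) (A : Matrix (Fin m) (Fin n) ℝ) (i : Fin n) : ℝ :=
  Finset.univ.sup' ⟨⟨0, hm⟩, Finset.mem_univ _⟩ fun j : Fin m => A j i

/-!
Every entry of column `i` is at most `‖A_{:i}‖_∞`, so `x₀` makes every constraint slack by `ε/2`:
`(A x₀)_j ≤ 1 - ε/2`. With `1/μ = 4 log(nm/ε)` each exponential penalty is then at most
`exp(-2 log(nm/ε)) = (ε/(nm))²`, and the total penalty `μ m (ε/(nm))²` is below `ε/(2n)`.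
The linear part contributes at most `-(1 - ε/2)/n`, through the column with `‖A_{:i}‖_∞ = 1`.
-/

open Finset Real

theorem le_colMax {m n : ℕ} (hm : 0 < m) (A : Matrix (Fin m) (Fin n) ℝ) (j : Fin m) (i : Fin n) :
    A j i ≤ colMax hm A i :=
  le_sup' (fun j => A j i) (mem_univ j)

theorem mulVec_div_colBound_le {m n : ℕ} {A : Matrix (Fin m) (Fin n) ℝ} {M : Fin n → ℝ}
    (hAM : ∀ j i, A j i ≤ M i) (hM : ∀ i, 0 < M i) {c : ℝ} (hc : 0 ≤ c) (j : Fin m) :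
    A.mulVec (fun i => c / (n * M i)) j ≤ c := by
  rcases Nat.eq_zero_or_pos n with rfl | hn
  · simp [Matrix.mulVec, dotProduct, hc]
  have hterm : ∀ i, A j i * (c / (n * M i)) ≤ c / n := fun i =>
    calc A j i * (c / (n * M i)) ≤ M i * (c / (n * M i)) := by
          gcongr
          · have := hM i; positivity
          · exact hAM j i
      _ = c / n := by field_simp [(hM i).ne']
  calc A.mulVec (fun i => c / (n * M i)) j = ∑ i, A j i * (c / (n * M i)) := rfl
    _ ≤ ∑ _i : Fin n, c / n := sum_le_sum fun i _ => hterm i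
    _ = c := by rw [sum_const, card_univ, Fintype.card_fin, nsmul_eq_mul]; field_simp

theorem div_le_sum_div_colBound {n : ℕ} {M : Fin n → ℝ} (hM : ∀ i, 0 < M i) {i₀ : Fin n}
    (hi₀ : M i₀ = 1) {c : ℝ} (hc : 0 ≤ c) :
    c / n ≤ ∑ i, c / (n * M i) := by
  calc c / n = c / (n * M i₀) := by rw [hi₀, mul_one]
    _ ≤ ∑ i, c / (n * M i) :=
      single_le_sum (f := fun i => c / (n * M i)) (fun i _ => by have := hM i; positivity)
        (mem_univ i₀)

theorem fmu_le_of_mulVec_le {m n : ℕ} {A : Matrix (Fin m) (Fin n) ℝ} {μ δ : ℝ} (hμ : 0 < μ)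
    {x : Fin n → ℝ} (hx : ∀ j, A.mulVec x j ≤ 1 - δ) :
    fmu A μ x ≤ -(∑ i, x i) + μ * m * exp (-(δ / μ)) := by
  have hexponent : ∀ j, (1 / μ) * (A.mulVec x j - 1) ≤ -(δ / μ) := fun j =>
    calc 1 / μ * (A.mulVec x j - 1) ≤ 1 / μ * (-δ) := by gcongr; linarith [hx j]
      _ = -(δ / μ) := by ring
  calc fmu A μ x ≤ -(∑ i, x i) + μ * ∑ _j : Fin m, exp (-(δ / μ)) := by
        unfold fmu; gcongr with j; exact hexponent j
    _ = -(∑ i, x i) + μ * m * exp (-(δ / μ)) := by simp [mul_assoc]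

theorem exp_neg_two_mul_log_s4 {r : ℝ} (hr : 0 < r) : exp (-(2 * log r)) = (r ^ 2)⁻¹ := by
  rw [exp_neg, ← Nat.cast_ofNat, exp_nat_mul, exp_log hr]

theorem half_lt_log_mul_div {m n : ℕ} (hm : 0 < m) (hn : 0 < n) {ε : ℝ} (hε0 : 0 < ε)
    (hε : ε ≤ 1 / 2) : 1 / 2 < log (n * m / ε) := by
  have hnm : (1 : ℝ) ≤ n * m :=
    one_le_mul_of_one_le_of_one_le (by exact_mod_cast hn) (by exact_mod_cast hm)
  have h2 : (2 : ℝ) ≤ n * m / ε := by rw [le_div_iff₀ hε0]; linarith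
  linarith [log_two_gt_d9, log_le_log two_pos h2]

theorem smoothed_penalty_le {m n : ℕ} (hm : 0 < m) (hn : 0 < n) {ε : ℝ} (hε0 : 0 < ε)
    (hε : ε ≤ 1 / 2) {μ : ℝ} (hμ : μ = ε / (4 * log (n * m / ε))) :
    μ * m * exp (-(ε / 2 / μ)) ≤ ε / (2 * n) := by
  set L := log (n * m / ε)
  have hL : 1 / 2 < L := half_lt_log_mul_div hm hn hε0 hε
  have hexp : exp (-(ε / 2 / μ)) = (ε / (n * m)) ^ 2 := by
    rw [show ε / 2 / μ = 2 * L by rw [hμ]; field_simp; ring, exp_neg_two_mul_log_s4 (by positivity)]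
    field_simp
  have hμε : μ ≤ ε / 2 := by
    rw [hμ, div_le_div_iff₀ (by positivity) two_pos]; nlinarith
  have hnm : (1 : ℝ) ≤ n * m :=
    one_le_mul_of_one_le_of_one_le (by exact_mod_cast hn) (by exact_mod_cast hm)
  have hμε' : μ * ε ≤ 1 / 4 := by nlinarith
  calc μ * m * exp (-(ε / 2 / μ)) = μ * ε * ε / (n * (n * m)) := by rw [hexp]; field_simp
    _ ≤ 1 / 4 * ε / (n * 1) := by gcongr
    _ ≤ ε / (2 * n) := by field_simp; linarith

theorem fmu_at_x0_general (m n : ℕ) (hm : 0 < m) (hn : 0 < n)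
    (A : Matrix (Fin m) (Fin n) ℝ)
    (ε : ℝ) (hε : ε ∈ Set.Ioc (0 : ℝ) (1 / 2))
    (μ : ℝ) (hμ : μ = ε / (4 * Real.log ((n : ℝ) * m / ε)))
    (hmin : (Finset.univ.inf' ⟨⟨0, hn⟩, Finset.mem_univ _⟩ fun i : Fin n => colMax hm A i) = 1) :
    fmu A μ (fun i => (1 - ε / 2) / ((n : ℝ) * colMax hm A i)) ≤ -(1 - ε) / n := by
  obtain ⟨hε0, hε2⟩ := hε
  have hM : ∀ i, 0 < colMax hm A i := fun i =>
    one_pos.trans_le (hmin ▸ inf'_le _ (mem_univ i))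
  obtain ⟨i₀, -, hi₀⟩ := exists_mem_eq_inf' ⟨⟨0, hn⟩, mem_univ _⟩ (colMax hm A)
  have hc : 0 ≤ 1 - ε / 2 := by linarith
  have hμ0 : 0 < μ := by
    have := half_lt_log_mul_div hm hn hε0 hε2
    rw [hμ]; positivity
  calc fmu A μ (fun i => (1 - ε / 2) / (n * colMax hm A i))
      ≤ -(∑ i, (1 - ε / 2) / (n * colMax hm A i)) + μ * m * exp (-(ε / 2 / μ)) :=
        fmu_le_of_mulVec_le hμ0 (mulVec_div_colBound_le (le_colMax hm A) hM hc)
    _ ≤ -((1 - ε / 2) / n) + ε / (2 * n) := by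
        gcongr
        · exact div_le_sum_div_colBound hM (hi₀.symm.trans hmin) hc
        · exact smoothed_penalty_le hm hn hε0 hε2 hμ
    _ = -(1 - ε) / n := by field_simp; ring

/-- With `ε ∈ (0,1/2]`, `μ = ε/(4 log(nm/ε))`, and `minᵢ ‖A_{:i}‖_∞ = 1`, the point
`x₀` with `x₀[i] = (1 − ε/2)/(n‖A_{:i}‖_∞)` satisfies `f_μ(x₀) ≤ −(1 − ε)/n`. -/
theorem fmu_at_x0 (m n : ℕ) (hm : 0 < m) (hn : 0 < n)
    (A : Matrix (Fin m) (Fin n) ℝ) (hA : ∀ j i, 0 ≤ A j i)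
    (ε : ℝ) (hε : ε ∈ Set.Ioc (0 : ℝ) (1 / 2))
    (μ : ℝ) (hμ : μ = ε / (4 * Real.log ((n : ℝ) * m / ε)))
    (hmin : (Finset.univ.inf' ⟨⟨0, hn⟩, Finset.mem_univ _⟩ fun i : Fin n => colMax hm A i) = 1) :
    fmu A μ (fun i => (1 - ε / 2) / ((n : ℝ) * colMax hm A i)) ≤ -(1 - ε) / n :=
  fmu_at_x0_general m n hm hn A ε hε μ hμ hmin
end

section
/- Let ε ∈ (0, 1/2] and μ = ε/(4 log(nm/ε)), and suppose 1 ≤ opt ≤ n. Then for every x ∈ ℝⁿ with x ≥ 0 satisfying f_μ(x) ≤ 0, one has Ax ≤ (1 + ε)·1 and 1ᵀx ≤ (1 + ε)·opt. -/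
/-!
If some constraint were violated by more than `ε`, say `(Ax)ⱼ = λ > 1 + ε`, then `x / λ` is
feasible, so `1ᵀx ≤ λ·opt ≤ λ·n`. On the other hand `f_μ(x) ≤ 0` bounds the penalty
`μ·exp((λ − 1)/μ)` by `1ᵀx`, and the choice of `μ` makes `μ·exp(ε/μ) = ε y⁴ / (4 log y)` with
`y = nm/ε`, which is at least `(1 + ε)·n`; the remaining factor `exp((λ − 1 − ε)/μ)` outgrows
`λ / (1 + ε)`. Hence `Ax ≤ (1 + ε)·1`, and scaling once more gives `1ᵀx ≤ (1 + ε)·opt`.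
-/

open Real

def packingValues {ι κ : Type*} [Fintype κ] (A : Matrix ι κ ℝ) : Set ℝ :=
  {v | ∃ x : κ → ℝ, (∀ i, 0 ≤ x i) ∧ (∀ j, A.mulVec x j ≤ 1) ∧ v = ∑ i, x i}

theorem sum_le_mul_of_mulVec_le {ι κ : Type*} [Fintype κ] {A : Matrix ι κ ℝ} {opt c : ℝ}
    {x : κ → ℝ} (hopt : opt ∈ upperBounds (packingValues A)) (hx : ∀ i, 0 ≤ x i) (hc : 0 < c)
    (hAx : ∀ j, A.mulVec x j ≤ c) : ∑ i, x i ≤ c * opt := by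
  have hfeas : c⁻¹ * ∑ i, x i ∈ packingValues A := by
    refine ⟨c⁻¹ • x, fun i => by simpa using mul_nonneg (inv_nonneg.2 hc.le) (hx i),
      fun j => ?_, by simp [Finset.mul_sum]⟩
    rw [Matrix.mulVec_smul, Pi.smul_apply, smul_eq_mul, inv_mul_le_iff₀ hc, mul_one]
    exact hAx j
  rw [← inv_mul_le_iff₀ hc]
  exact hopt hfeas

theorem mul_exp_le_sum_of_fmu_nonpos {m n : ℕ} {A : Matrix (Fin m) (Fin n) ℝ} {μ : ℝ}
    {x : Fin n → ℝ} (hμ : 0 ≤ μ) (hf : fmu A μ x ≤ 0) (j : Fin m) :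
    μ * exp ((A.mulVec x j - 1) / μ) ≤ ∑ i, x i := by
  have hterm : exp ((A.mulVec x j - 1) / μ) ≤ ∑ k, exp ((1 / μ) * (A.mulVec x k - 1)) := by
    rw [div_eq_inv_mul, ← one_div]
    exact Finset.single_le_sum (f := fun k => exp ((1 / μ) * (A.mulVec x k - 1)))
      (fun k _ => (exp_pos _).le) (Finset.mem_univ j)
  unfold fmu at hf
  nlinarith [mul_le_mul_of_nonneg_left hterm hμ]

theorem Real.six_mul_log_le_pow_three {y : ℝ} (hy : 0 < y) : 6 * log y ≤ y ^ 3 := by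
  nlinarith [log_le_sub_one_of_pos hy, mul_nonneg hy.le (sq_nonneg (y - 3 / 2))]

section SmoothingParameter

variable {ε μ y : ℝ}

theorem smoothing_param_pos (hε : 0 < ε) (hy : 1 < y) (hμ : μ = ε / (4 * log y)) : 0 < μ :=
  hμ ▸ div_pos hε (by linarith [log_pos hy])

theorem smoothing_param_le_one (hε : ε ≤ 1 / 2) (hy : 2 ≤ y) (hμ : μ = ε / (4 * log y)) :
    μ ≤ 1 := by
  have hlog : log 2 ≤ log y := log_le_log two_pos hy
  rw [hμ, div_le_one (by linarith [log_two_gt_d9])]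
  linarith [log_two_gt_d9]

theorem smoothing_param_mul_exp (hε : 0 < ε) (hy : 1 < y) (hμ : μ = ε / (4 * log y)) :
    μ * exp (ε / μ) = ε * y ^ 4 / (4 * log y) := by
  have hL : 0 < log y := log_pos hy
  have hεμ : ε / μ = (4 : ℕ) * log y := by rw [hμ]; field_simp; norm_num
  rw [hεμ, exp_nat_mul, exp_log (by linarith), hμ]
  ring

/-- With `y = nm/ε` the factor `ε y⁴` becomes `nm y³`, and `y³ ≥ 6 log y ≥ 4 (1 + ε) log y`. -/
theorem le_smoothing_param_mul_exp {n m : ℝ} (hε : 0 < ε) (hε2 : ε ≤ 1 / 2) (hn : 1 ≤ n)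
    (hm : 1 ≤ m) (hμ : μ = ε / (4 * log (n * m / ε))) : (1 + ε) * n ≤ μ * exp (ε / μ) := by
  set y := n * m / ε with hy
  have hy2 : 2 ≤ y := by rw [hy, le_div_iff₀ hε]; nlinarith
  have hL : 0 < log y := log_pos (by linarith)
  have hlog : 4 * (1 + ε) * log y ≤ m * y ^ 3 := by
    nlinarith [six_mul_log_le_pow_three (show 0 < y by linarith), pow_pos (show 0 < y by linarith) 3]
  have hεy : ε * y = n * m := by rw [hy]; field_simp
  rw [smoothing_param_mul_exp hε (by linarith) hμ, le_div_iff₀ (by positivity)]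
  calc (1 + ε) * n * (4 * log y) = n * (4 * (1 + ε) * log y) := by ring
    _ ≤ n * (m * y ^ 3) := mul_le_mul_of_nonneg_left hlog (by linarith)
    _ = ε * y ^ 4 := by rw [← mul_assoc, ← hεy]; ring

/-- Beyond `1 + ε` the penalty `μ exp((λ - 1)/μ)` grows at least like `(1 + ε)(λ - ε)`,
which exceeds `λ`. -/
theorem mul_lt_mul_exp_of_le_mul_exp {c l : ℝ} (hε : 0 < ε) (hμ0 : 0 < μ) (hμ1 : μ ≤ 1)
    (hc : 0 < c) (hbase : (1 + ε) * c ≤ μ * exp (ε / μ)) (hl : 1 + ε < l) :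
    l * c < μ * exp ((l - 1) / μ) := by
  set t := l - 1 - ε with ht
  have htμ : t ≤ t / μ := by rw [le_div_iff₀ hμ0]; nlinarith
  have hgrowth : 1 + t ≤ exp (t / μ) := by linarith [add_one_le_exp (t / μ)]
  have hsplit : μ * exp ((l - 1) / μ) = μ * exp (ε / μ) * exp (t / μ) := by
    rw [mul_assoc, ← exp_add, ht]; ring_nf
  rw [hsplit]
  calc l * c < (1 + ε) * c * (1 + t) := by nlinarith [mul_pos (mul_pos hε hc) (by linarith : 0 < t)]
    _ ≤ μ * exp (ε / μ) * exp (t / μ) := mul_le_mul hbase hgrowth (by linarith) (by positivity)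

end SmoothingParameter

theorem fmu_nonpos_approx_feasible_general (m n : ℕ) (hm : 0 < m) (hn : 0 < n)
    (A : Matrix (Fin m) (Fin n) ℝ)
    (ε : ℝ) (hε : ε ∈ Set.Ioc (0 : ℝ) (1 / 2))
    (μ : ℝ) (hμ : μ = ε / (4 * Real.log ((n : ℝ) * m / ε)))
    (opt : ℝ)
    (hopt : IsLUB {v : ℝ | ∃ x : Fin n → ℝ,
        (∀ i, 0 ≤ x i) ∧ (∀ j, A.mulVec x j ≤ 1) ∧ v = ∑ i, x i} opt)
    (hoptn : opt ≤ (n : ℝ)) :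
    ∀ x : Fin n → ℝ, (∀ i, 0 ≤ x i) → fmu A μ x ≤ 0 →
      (∀ j, A.mulVec x j ≤ 1 + ε) ∧ (∑ i, x i) ≤ (1 + ε) * opt := by
  intro x hx hf
  obtain ⟨hε0, hε2⟩ := hε
  have hn1 : (1 : ℝ) ≤ n := by exact_mod_cast hn
  have hm1 : (1 : ℝ) ≤ m := by exact_mod_cast hm
  have hy : 2 ≤ (n : ℝ) * m / ε := by rw [le_div_iff₀ hε0]; nlinarith
  have hμ0 := smoothing_param_pos hε0 (by linarith) hμ
  have hμ1 := smoothing_param_le_one hε2 hy hμ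
  have hopt' : opt ∈ upperBounds (packingValues A) := hopt.1
  have : Nonempty (Fin m) := ⟨⟨0, hm⟩⟩
  obtain ⟨j₀, hj₀⟩ := Finite.exists_max (fun j => A.mulVec x j)
  have hmax : A.mulVec x j₀ ≤ 1 + ε := by
    by_contra! hviol
    have hpenalty := mul_exp_le_sum_of_fmu_nonpos hμ0.le hf j₀
    have hscaled := sum_le_mul_of_mulVec_le hopt' hx (by linarith) hj₀
    have hgrowth := mul_lt_mul_exp_of_le_mul_exp hε0 hμ0 hμ1 (by linarith)
      (le_smoothing_param_mul_exp hε0 hε2 hn1 hm1 hμ) hviol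
    nlinarith
  have hAx : ∀ j, A.mulVec x j ≤ 1 + ε := fun j => (hj₀ j).trans hmax
  exact ⟨hAx, sum_le_mul_of_mulVec_le hopt' hx (by linarith) hAx⟩

/-- With `ε ∈ (0,1/2]`, `μ = ε/(4 log(nm/ε))`, and `1 ≤ opt ≤ n`, every `x ≥ 0`
with `f_μ(x) ≤ 0` satisfies `Ax ≤ (1 + ε)·1` and `1ᵀx ≤ (1 + ε)·opt`. -/
theorem fmu_nonpos_approx_feasible (m n : ℕ) (hm : 0 < m) (hn : 0 < n)
    (A : Matrix (Fin m) (Fin n) ℝ) (hA : ∀ j i, 0 ≤ A j i)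
    (ε : ℝ) (hε : ε ∈ Set.Ioc (0 : ℝ) (1 / 2))
    (μ : ℝ) (hμ : μ = ε / (4 * Real.log ((n : ℝ) * m / ε)))
    (opt : ℝ)
    (hopt : IsLUB {v : ℝ | ∃ x : Fin n → ℝ,
        (∀ i, 0 ≤ x i) ∧ (∀ j, A.mulVec x j ≤ 1) ∧ v = ∑ i, x i} opt)
    (hopt1 : 1 ≤ opt) (hoptn : opt ≤ (n : ℝ)) :
    ∀ x : Fin n → ℝ, (∀ i, 0 ≤ x i) → fmu A μ x ≤ 0 →
      (∀ j, A.mulVec x j ≤ 1 + ε) ∧ (∑ i, x i) ≤ (1 + ε) * opt :=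
  fmu_nonpos_approx_feasible_general m n hm hn A ε hε μ hμ opt hopt hoptn
end

section
/- Assume the setup of the bucketed truncated-gradient update with ε ∈ (0, 1/2], μ = ε/(4 log(nm/ε)), and α = μ/20. Let x ∈ ℝⁿ with x ≥ 0 and Ax ≤ (1 + ε)·1, let t ∈ {0, …, w−1}, and let B_t = {i : ξ^{(t)}_i ≠ 0}. Then for every τ ∈ [0, 1], setting z = τ·x + (1 − τ)·x′^{(t)}, for every i ∈ B_t the value ∇_i f_μ(z) lies between (1/2)·∇_i f_μ(x) and (3/2)·∇_i f_μ(x). -/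
/-!
Every coordinate moves by a factor `exp (± α |ξ^{(t)}_i|)` with `α |ξ^{(t)}_i| ≤ μ E / 10`, where
`E = ε 2ᵗ`; since `A ≥ 0`, so does every `(Ax)_j`, and feasibility turns this into an additive
change of at most `3 μ E / 16` of `(Ax)_j`. Each exponential in `∇_i f_μ` then moves by a factor
`exp (± 3E/16)`, so `|∇_i f_μ(z) - ∇_i f_μ(x)| ≤ (E/4) (∇_i f_μ(x) + 1)`. A coordinate in bucket `t`
has `E < |∇_i f_μ(x)|`, and `E ≤ 1` because `|ξ_i| ≤ 1`; this makes the change at most half of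
`|∇_i f_μ(x)|`.
-/

open Real Set Matrix

/-- The gradient of `f_μ`: `∇ᵢ f_μ(x) = −1 + ∑ⱼ A_{ji} exp((1/μ)((Ax)ⱼ − 1))`. -/
noncomputable def gradFmu {m n : ℕ} (A : Matrix (Fin m) (Fin n) ℝ) (μ : ℝ) (x : Fin n → ℝ)
    (i : Fin n) : ℝ :=
  -1 + ∑ j, A j i * Real.exp ((1 / μ) * (A.mulVec x j - 1))

/-- Truncated gradient `ξ`: zero on `[−ε, ε]`, capped at `1` above `1`, equal to `g` in between. -/
noncomputable def xiTrunc {n : ℕ} (ε : ℝ) (g : Fin n → ℝ) (i : Fin n) : ℝ :=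
  if g i ∈ Set.Icc (-ε) ε then 0 else if 1 < g i then 1 else g i

/-- The large component `η`: `ηᵢ = gᵢ − 1` when `gᵢ > 1`, and `0` otherwise. -/
noncomputable def etaTrunc {n : ℕ} (g : Fin n → ℝ) (i : Fin n) : ℝ :=
  if 1 < g i then g i - 1 else 0

/-- Bucketed truncated gradient `ξ^{(t)}`: keeps `ξᵢ` when `ξᵢ ∈ (ε2ᵗ, ε2^{t+1}] ∪ [−ε2^{t+1}, −ε2ᵗ)`. -/
noncomputable def xiBucket {n : ℕ} (ε : ℝ) (ξ : Fin n → ℝ) (t : ℕ) (i : Fin n) : ℝ :=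
  if ξ i ∈ Set.Ioc (ε * 2 ^ t) (ε * 2 ^ (t + 1)) ∪ Set.Ico (-(ε * 2 ^ (t + 1))) (-(ε * 2 ^ t))
    then ξ i else 0

/-- Bucketed large component `η^{(t)}`: equals `η` when `t = w − 1`, and `0` otherwise. -/
noncomputable def etaBucket {n : ℕ} (w : ℕ) (η : Fin n → ℝ) (t : ℕ) : Fin n → ℝ :=
  if t = w - 1 then η else 0

/-- The update step: `x′^{(t)}ᵢ = xᵢ · exp(−α ξ^{(t)}ᵢ)`. -/
noncomputable def updStep {n : ℕ} (α : ℝ) (x ξt : Fin n → ℝ) (i : Fin n) : ℝ :=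
  x i * Real.exp (-(α * ξt i))

/-- The number of buckets `w = ⌈log₂(1/ε)⌉`. -/
noncomputable def wBuckets (ε : ℝ) : ℕ := ⌈Real.logb 2 (1 / ε)⌉₊

lemma exp_sub_one_le_five_fourths_mul {x : ℝ} (h0 : 0 ≤ x) (h1 : x ≤ 1 / 5) :
    exp x - 1 ≤ 5 / 4 * x := by
  have h := exp_bound_div_one_sub_of_interval h0 (by linarith)
  rw [le_div_iff₀ (by linarith)] at h
  nlinarith

lemma div_four_log_mul_div_mem_Ioc {m n : ℕ} (hm : 0 < m) (hn : 0 < n) {ε : ℝ}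
    (hε : ε ∈ Ioc 0 (1 / 2)) : ε / (4 * log ((n : ℝ) * m / ε)) ∈ Ioc 0 (1 / 4) := by
  have hnm : (1 : ℝ) ≤ n * m := by norm_cast; exact Nat.one_le_iff_ne_zero.2 (by positivity)
  have h2 : (2 : ℝ) ≤ n * m / ε := by rw [le_div_iff₀ hε.1]; linarith [hε.2]
  have hL : 1 / 2 < log ((n : ℝ) * m / ε) := by
    linarith [log_le_log (by norm_num) h2, log_two_gt_d9]
  refine ⟨div_pos hε.1 (by linarith), ?_⟩
  rw [div_le_iff₀ (by linarith)]
  nlinarith [hε.2]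

section ExpFactor

variable {a b d y : ℝ}

lemma mul_exp_mem_Icc (ha : 0 ≤ a) (hd : |d| ≤ b) :
    a * exp d ∈ Icc (exp (-b) * a) (exp b * a) := by
  rw [abs_le] at hd
  rw [mul_comm a]
  exact ⟨mul_le_mul_of_nonneg_right (exp_le_exp.2 (by linarith)) ha,
    mul_le_mul_of_nonneg_right (exp_le_exp.2 hd.2) ha⟩

lemma convex_combo_mul_exp_mem_Icc (ha : 0 ≤ a) (hd : |d| ≤ b) {τ : ℝ} (hτ : τ ∈ Icc (0 : ℝ) 1) :
    τ * a + (1 - τ) * (a * exp d) ∈ Icc (exp (-b) * a) (exp b * a) := by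
  have hself : a ∈ Icc (exp (-b) * a) (exp b * a) := by
    simpa using mul_exp_mem_Icc (d := 0) ha (by simpa using (abs_nonneg d).trans hd)
  simpa only [smul_eq_mul] using
    convex_Icc _ _ hself (mul_exp_mem_Icc ha hd) hτ.1 (sub_nonneg.2 hτ.2) (by ring)

lemma abs_sub_le_of_mem_Icc_exp_mul (ha : 0 ≤ a) (hy : y ∈ Icc (exp (-b) * a) (exp b * a)) :
    |y - a| ≤ (exp b - 1) * a := by
  have hcosh := one_le_cosh b
  rw [cosh_eq] at hcosh
  have hlow : (1 - exp (-b)) * a ≤ (exp b - 1) * a := mul_le_mul_of_nonneg_right (by linarith) ha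
  rw [abs_sub_le_iff]
  constructor <;> linarith [hy.1, hy.2]

end ExpFactor

lemma sum_mul_mem_Icc_mul {ι : Type*} (s : Finset ι) {w a y : ι → ℝ} {r R : ℝ}
    (hw : ∀ k ∈ s, 0 ≤ w k) (hy : ∀ k ∈ s, y k ∈ Icc (r * a k) (R * a k)) :
    ∑ k ∈ s, w k * y k ∈ Icc (r * ∑ k ∈ s, w k * a k) (R * ∑ k ∈ s, w k * a k) := by
  rw [Finset.mul_sum, Finset.mul_sum]
  constructor <;> refine Finset.sum_le_sum fun k hk => ?_ <;> rw [mul_left_comm]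
  · exact mul_le_mul_of_nonneg_left (hy k hk).1 (hw k hk)
  · exact mul_le_mul_of_nonneg_left (hy k hk).2 (hw k hk)

lemma mulVec_mem_Icc_mul {m n : Type*} [Fintype n] {A : Matrix m n ℝ} (hA : ∀ j i, 0 ≤ A j i)
    {x z : n → ℝ} {r R : ℝ} (h : ∀ i, z i ∈ Icc (r * x i) (R * x i)) (j : m) :
    (A *ᵥ z) j ∈ Icc (r * (A *ᵥ x) j) (R * (A *ᵥ x) j) :=
  sum_mul_mem_Icc_mul Finset.univ (fun i _ => hA j i) (fun i _ => h i)

lemma abs_mulVec_sub_le {m n : Type*} [Fintype n] {A : Matrix m n ℝ} (hA : ∀ j i, 0 ≤ A j i)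
    {x z : n → ℝ} (hx : ∀ i, 0 ≤ x i) {ε : ℝ} (hε : ε ≤ 1 / 2)
    (hfeas : ∀ j, (A *ᵥ x) j ≤ 1 + ε) {b : ℝ} (hb0 : 0 ≤ b) (hb : b ≤ 1 / 5)
    (hz : ∀ i, z i ∈ Icc (exp (-b) * x i) (exp b * x i)) (j : m) :
    |(A *ᵥ z) j - (A *ᵥ x) j| ≤ 15 / 8 * b := by
  have hAx : 0 ≤ (A *ᵥ x) j := Finset.sum_nonneg fun i _ => mul_nonneg (hA j i) (hx i)
  calc _ ≤ (exp b - 1) * (A *ᵥ x) j :=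
        abs_sub_le_of_mem_Icc_exp_mul hAx (mulVec_mem_Icc_mul hA hz j)
    _ ≤ 5 / 4 * b * (1 + ε) :=
        mul_le_mul (exp_sub_one_le_five_fourths_mul hb0 hb) (hfeas j) hAx (by positivity)
    _ ≤ 15 / 8 * b := by nlinarith

lemma neg_one_le_gradFmu {m n : ℕ} {A : Matrix (Fin m) (Fin n) ℝ} (hA : ∀ j i, 0 ≤ A j i)
    (μ : ℝ) (x : Fin n → ℝ) (i : Fin n) : -1 ≤ gradFmu A μ x i := by
  have := Finset.sum_nonneg fun j (_ : j ∈ Finset.univ) => mul_nonneg (hA j i)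
    (exp_pos ((1 / μ) * (A.mulVec x j - 1))).le
  unfold gradFmu
  linarith

lemma abs_gradFmu_sub_le {m n : ℕ} {A : Matrix (Fin m) (Fin n) ℝ} (hA : ∀ j i, 0 ≤ A j i)
    {μ c : ℝ} (hμ : 0 < μ) {x z : Fin n → ℝ} (h : ∀ j, |(A *ᵥ z) j - (A *ᵥ x) j| ≤ μ * c)
    (i : Fin n) :
    |gradFmu A μ z i - gradFmu A μ x i| ≤ (exp c - 1) * (gradFmu A μ x i + 1) := by
  have hterm : ∀ j, exp ((1 / μ) * ((A *ᵥ z) j - 1)) ∈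
      Icc (exp (-c) * exp ((1 / μ) * ((A *ᵥ x) j - 1)))
        (exp c * exp ((1 / μ) * ((A *ᵥ x) j - 1))) := by
    intro j
    rw [show (1 / μ) * ((A *ᵥ z) j - 1) =
      (1 / μ) * ((A *ᵥ x) j - 1) + (1 / μ) * ((A *ᵥ z) j - (A *ᵥ x) j) by ring, exp_add]
    refine mul_exp_mem_Icc (exp_pos _).le ?_
    rw [abs_mul, abs_of_pos (one_div_pos.2 hμ), one_div, inv_mul_le_iff₀ hμ]
    exact h j
  have hsum := abs_sub_le_of_mem_Icc_exp_mul
    (Finset.sum_nonneg fun j _ => mul_nonneg (hA j i) (exp_pos _).le)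
    (sum_mul_mem_Icc_mul Finset.univ (fun j _ => hA j i) (fun j _ => hterm j))
  unfold gradFmu
  convert hsum using 2 <;> ring

lemma abs_xiTrunc_le_abs {n : ℕ} (ε : ℝ) (g : Fin n → ℝ) (i : Fin n) :
    |xiTrunc ε g i| ≤ |g i| := by
  unfold xiTrunc
  split_ifs with _ hbig
  · simp
  · simpa using le_abs.2 (Or.inl hbig.le)
  · rfl

lemma abs_xiTrunc_le_one {n : ℕ} (ε : ℝ) {g : Fin n → ℝ} {i : Fin n} (hg : -1 ≤ g i) :
    |xiTrunc ε g i| ≤ 1 := by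
  unfold xiTrunc
  split_ifs with _ hbig
  · simp
  · simp
  · exact abs_le.2 ⟨hg, not_lt.1 hbig⟩

lemma abs_xiBucket_le {n : ℕ} {ε : ℝ} (hε : 0 ≤ ε) (ξ : Fin n → ℝ) (t : ℕ) (i : Fin n) :
    |xiBucket ε ξ t i| ≤ 2 * (ε * 2 ^ t) := by
  unfold xiBucket
  split_ifs with hb
  · rw [pow_succ, ← mul_assoc, mul_comm _ (2 : ℝ)] at hb
    rcases hb with hb | hb <;> exact abs_le.2 ⟨by linarith [hb.1, hb.2], by linarith [hb.1, hb.2]⟩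
  · simp only [abs_zero]
    positivity

lemma lt_abs_of_xiBucket_ne_zero {n : ℕ} {ε : ℝ} {ξ : Fin n → ℝ} {t : ℕ} {i : Fin n}
    (h : xiBucket ε ξ t i ≠ 0) : ε * 2 ^ t < |ξ i| := by
  unfold xiBucket at h
  split_ifs at h with hb
  · rcases hb with hb | hb
    · exact lt_abs.2 (Or.inl hb.1)
    · exact lt_abs.2 (Or.inr (by linarith [hb.2]))
  · exact absurd rfl h

lemma mem_uIcc_half_three_halves_of_abs_sub_le {g g' E : ℝ} (hg : -1 ≤ g) (hE : E ≤ 1)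
    (hEg : E < |g|) (h : |g' - g| ≤ E / 4 * (g + 1)) : g' ∈ uIcc (1 / 2 * g) (3 / 2 * g) := by
  rw [abs_sub_le_iff] at h
  rcases le_or_gt 0 g with hpos | hneg
  · rw [abs_of_nonneg hpos] at hEg
    rw [uIcc_of_le (by linarith)]
    constructor <;> nlinarith
  · rw [abs_of_neg hneg] at hEg
    rw [uIcc_of_ge (by linarith)]
    constructor <;> nlinarith

theorem local_gradient_stability_general (m n : ℕ) (hm : 0 < m) (hn : 0 < n)
    (A : Matrix (Fin m) (Fin n) ℝ) (hA : ∀ j i, 0 ≤ A j i)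
    (ε : ℝ) (hε : ε ∈ Set.Ioc (0 : ℝ) (1 / 2))
    (μ : ℝ) (hμ : μ = ε / (4 * Real.log ((n : ℝ) * m / ε)))
    (α : ℝ) (hα : α = μ / 20)
    (x : Fin n → ℝ) (hx : ∀ i, 0 ≤ x i) (hfeas : ∀ j, A.mulVec x j ≤ 1 + ε)
    (t : ℕ) :
    ∀ i : Fin n, xiBucket ε (xiTrunc ε (gradFmu A μ x)) t i ≠ 0 →
      ∀ τ ∈ Set.Icc (0 : ℝ) 1,
        gradFmu A μ
            (fun i' => τ * x i' +
              (1 - τ) * updStep α x (xiBucket ε (xiTrunc ε (gradFmu A μ x)) t) i') i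
          ∈ Set.uIcc ((1 / 2) * gradFmu A μ x i) ((3 / 2) * gradFmu A μ x i) := by
  intro i hi τ hτ
  obtain ⟨hμ0, hμ4⟩ := hμ ▸ div_four_log_mul_div_mem_Ioc hm hn hε
  set g := gradFmu A μ x
  set E := ε * 2 ^ t
  have hE0 : 0 < E := by have := hε.1; positivity
  have hEg := (lt_abs_of_xiBucket_ne_zero hi).trans_le (abs_xiTrunc_le_abs ε g i)
  have hE1 : E ≤ 1 := (lt_abs_of_xiBucket_ne_zero hi).le.trans
    (abs_xiTrunc_le_one ε (neg_one_le_gradFmu hA μ x i))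
  have hα0 : 0 < α := by rw [hα]; positivity
  have hstep : ∀ i', |-(α * xiBucket ε (xiTrunc ε g) t i')| ≤ μ * E / 10 := fun i' => by
    rw [abs_neg, abs_mul, abs_of_pos hα0]
    calc α * _ ≤ α * (2 * E) := mul_le_mul_of_nonneg_left (abs_xiBucket_le hε.1.le _ t i') hα0.le
      _ = μ * E / 10 := by rw [hα]; ring
  have hz := fun i' => convex_combo_mul_exp_mem_Icc (hx i') (hstep i') hτ
  have hβ : μ * E / 10 ≤ 1 / 5 := by nlinarith
  have hAz : ∀ j, |(A *ᵥ _) j - (A *ᵥ x) j| ≤ μ * (3 * E / 16) := fun j =>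
    (abs_mulVec_sub_le hA hx hε.2 hfeas (by positivity) hβ hz j).trans_eq (by ring)
  refine mem_uIcc_half_three_halves_of_abs_sub_le (neg_one_le_gradFmu hA μ x i) hE1 hEg
    ((abs_gradFmu_sub_le hA hμ0 hAz i).trans ?_)
  have := exp_sub_one_le_five_fourths_mul (x := 3 * E / 16) (by positivity) (by linarith)
  nlinarith [neg_one_le_gradFmu hA μ x i]

/-- with `ε ∈ (0,1/2]`, `μ = ε/(4 log(nm/ε))`, `α = μ/20`, and `x ≥ 0` with
`Ax ≤ (1 + ε)·1`, for every bucket `t < w`, every updated coordinate `i` (i.e. `ξ^{(t)}ᵢ ≠ 0`),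
and every point `z = τx + (1 − τ)x′^{(t)}` with `τ ∈ [0,1]`, the value `∇ᵢ f_μ(z)` lies between
`(1/2)∇ᵢ f_μ(x)` and `(3/2)∇ᵢ f_μ(x)`. -/
theorem local_gradient_stability (m n : ℕ) (hm : 0 < m) (hn : 0 < n)
    (A : Matrix (Fin m) (Fin n) ℝ) (hA : ∀ j i, 0 ≤ A j i)
    (ε : ℝ) (hε : ε ∈ Set.Ioc (0 : ℝ) (1 / 2))
    (μ : ℝ) (hμ : μ = ε / (4 * Real.log ((n : ℝ) * m / ε)))
    (α : ℝ) (hα : α = μ / 20)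
    (x : Fin n → ℝ) (hx : ∀ i, 0 ≤ x i) (hfeas : ∀ j, A.mulVec x j ≤ 1 + ε)
    (t : ℕ) (ht : t < wBuckets ε) :
    ∀ i : Fin n, xiBucket ε (xiTrunc ε (gradFmu A μ x)) t i ≠ 0 →
      ∀ τ ∈ Set.Icc (0 : ℝ) 1,
        gradFmu A μ
            (fun i' => τ * x i' +
              (1 - τ) * updStep α x (xiBucket ε (xiTrunc ε (gradFmu A μ x)) t) i') i
          ∈ Set.uIcc ((1 / 2) * gradFmu A μ x i) ((3 / 2) * gradFmu A μ x i) :=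
  local_gradient_stability_general m n hm hn A hA ε hε μ hμ α hα x hx hfeas t
end

section
/- Let ε ∈ (0, 1/2], μ > 0, α = μ/20, and let t ≥ 0 be an integer with ε·2ᵗ ≤ 1. Let x ∈ ℝⁿ with x ≥ 0 and Ax ≤ (1 + ε)·1, and let z ∈ ℝⁿ satisfy |z_i − x_i| ≤ (8/3)·α·ε·2ᵗ·x_i for every i. Then for every j ∈ {1, …, m}: (1 − ε·2ᵗ/4)·p_j(x) ≤ p_j(z) ≤ (1 + ε·2ᵗ/4)·p_j(x), where p_j(x) = exp((1/μ)((Ax)_j − 1)). -/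
/-- The exponential penalty `p_j(x) = exp((1/μ)((Ax)ⱼ − 1))`. -/
noncomputable def pj {m n : ℕ} (A : Matrix (Fin m) (Fin n) ℝ) (μ : ℝ) (x : Fin n → ℝ)
    (j : Fin m) : ℝ :=
  Real.exp ((1 / μ) * (A.mulVec x j - 1))

/-!
Writing `d = (Az)ⱼ − (Ax)ⱼ`, we have `p_j(z) = p_j(x) · exp(d/μ)`. Nonnegativity of `A` turns the
coordinatewise relative bound on `z − x` into `|d| ≤ (8/3)αε2ᵗ(Ax)ⱼ`, and feasibility
`(Ax)ⱼ ≤ 1 + ε ≤ 3/2` then gives `|d/μ| ≤ ε2ᵗ/5 ≤ 1/5`. On that range `|exp u − 1| ≤ (1 + |u|)|u|`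
is at most `ε2ᵗ/4`.
-/

open Matrix

theorem abs_dotProduct_sub_le_of_abs_sub_le {ι : Type*} [Fintype ι] {w x z : ι → ℝ} {c : ℝ}
    (hw : ∀ i, 0 ≤ w i) (h : ∀ i, |z i - x i| ≤ c * x i) :
    |w ⬝ᵥ z - w ⬝ᵥ x| ≤ c * (w ⬝ᵥ x) := by
  rw [← dotProduct_sub, dotProduct, dotProduct, Finset.mul_sum]
  refine (Finset.abs_sum_le_sum_abs _ _).trans (Finset.sum_le_sum fun i _ => ?_)
  rw [abs_mul, abs_of_nonneg (hw i), Pi.sub_apply, mul_left_comm]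
  exact mul_le_mul_of_nonneg_left (h i) (hw i)

theorem Real.abs_exp_sub_one_le_mul_abs {u : ℝ} (hu : |u| ≤ 1) :
    |Real.exp u - 1| ≤ (1 + |u|) * |u| := by
  calc |Real.exp u - 1| = |(Real.exp u - 1 - u) + u| := by ring_nf
    _ ≤ |Real.exp u - 1 - u| + |u| := abs_add_le _ _
    _ ≤ u ^ 2 + |u| := by gcongr; exact Real.abs_exp_sub_one_sub_id_le hu
    _ = (1 + |u|) * |u| := by rw [← sq_abs]; ring

theorem pj_eq_mul_exp {m n : ℕ} (A : Matrix (Fin m) (Fin n) ℝ) (μ : ℝ) (x z : Fin n → ℝ)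
    (j : Fin m) : pj A μ z j = pj A μ x j * Real.exp (((A *ᵥ z) j - (A *ᵥ x) j) / μ) := by
  rw [pj, pj, ← Real.exp_add]
  congr 1
  ring

theorem penalty_stability_general (m n : ℕ)
    (A : Matrix (Fin m) (Fin n) ℝ) (hA : ∀ j i, 0 ≤ A j i)
    (ε : ℝ) (hε : ε ∈ Set.Ioc (0 : ℝ) (1 / 2))
    (μ : ℝ) (hμ : 0 < μ) (α : ℝ) (hα : α = μ / 20)
    (t : ℕ) (ht : ε * 2 ^ t ≤ 1)
    (x : Fin n → ℝ) (hfeas : ∀ j, A.mulVec x j ≤ 1 + ε)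
    (z : Fin n → ℝ) (hz : ∀ i, |z i - x i| ≤ (8 / 3) * α * ε * 2 ^ t * x i) :
    ∀ j : Fin m,
      (1 - ε * 2 ^ t / 4) * pj A μ x j ≤ pj A μ z j ∧
      pj A μ z j ≤ (1 + ε * 2 ^ t / 4) * pj A μ x j := by
  intro j
  obtain ⟨hε0, hε2⟩ := hε
  subst hα
  set s := ε * 2 ^ t
  have hs0 : 0 ≤ s := by positivity
  have hd : |(A *ᵥ z) j - (A *ᵥ x) j| ≤ (8 / 3) * (μ / 20) * s * (A *ᵥ x) j :=
    abs_dotProduct_sub_le_of_abs_sub_le (hA j) fun i => (hz i).trans_eq (by ring)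
  have hu : |((A *ᵥ z) j - (A *ᵥ x) j) / μ| ≤ s / 5 := by
    rw [abs_div, abs_of_pos hμ, div_le_iff₀ hμ]
    have hμs : 0 ≤ μ * s := mul_nonneg hμ.le hs0
    nlinarith [mul_le_mul_of_nonneg_left (hfeas j) hμs, mul_le_mul_of_nonneg_left hε2 hμs]
  have hexp : |Real.exp (((A *ᵥ z) j - (A *ᵥ x) j) / μ) - 1| ≤ s / 4 := by
    refine (Real.abs_exp_sub_one_le_mul_abs (by linarith)).trans ?_
    nlinarith [abs_nonneg (((A *ᵥ z) j - (A *ᵥ x) j) / μ)]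
  have hpx : 0 < pj A μ x j := Real.exp_pos _
  rw [pj_eq_mul_exp A μ x z j]
  obtain ⟨hlo, hhi⟩ := abs_le.mp hexp
  constructor <;> nlinarith

/-- with `ε ∈ (0,1/2]`, `μ > 0`, `α = μ/20`, `ε·2ᵗ ≤ 1`, `x ≥ 0` with
`Ax ≤ (1 + ε)·1`, and `z` with `|zᵢ − xᵢ| ≤ (8/3)αε2ᵗxᵢ` for all `i`, the penalties satisfy
`(1 − ε2ᵗ/4)p_j(x) ≤ p_j(z) ≤ (1 + ε2ᵗ/4)p_j(x)` for every `j`. -/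
theorem penalty_stability (m n : ℕ) (hm : 0 < m) (hn : 0 < n)
    (A : Matrix (Fin m) (Fin n) ℝ) (hA : ∀ j i, 0 ≤ A j i)
    (ε : ℝ) (hε : ε ∈ Set.Ioc (0 : ℝ) (1 / 2))
    (μ : ℝ) (hμ : 0 < μ) (α : ℝ) (hα : α = μ / 20)
    (t : ℕ) (ht : ε * 2 ^ t ≤ 1)
    (x : Fin n → ℝ) (hx : ∀ i, 0 ≤ x i) (hfeas : ∀ j, A.mulVec x j ≤ 1 + ε)
    (z : Fin n → ℝ) (hz : ∀ i, |z i - x i| ≤ (8 / 3) * α * ε * 2 ^ t * x i) :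
    ∀ j : Fin m,
      (1 - ε * 2 ^ t / 4) * pj A μ x j ≤ pj A μ z j ∧
      pj A μ z j ≤ (1 + ε * 2 ^ t / 4) * pj A μ x j :=
  penalty_stability_general m n A hA ε hε μ hμ α hα t ht x hfeas z hz
end

section
/- Let x ∈ ℝⁿ have all entries positive and let y ∈ ℝⁿ have all entries nonnegative. Then V_x(y) = ∑_{i=1}^n (y_i log(y_i/x_i) + x_i − y_i) ≥ ∑_{i=1}^n (x_i − y_i)²/(2·max{x_i, y_i}). -/
/-!
Each summand is handled separately. For fixed `a > 0` and `M ≥ a`, the function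
`s ↦ s log (s/a) + a - s - (a - s)²/(2M)` vanishes at `s = a`, and its derivative
`log (s/a) - (s - a)/M` has the sign of `s - a` on `(0, M]`, by the elementary bounds
`1 - 1/t ≤ log t ≤ t - 1`. Hence it is nonnegative on `[0, M]`; take `M = max a b`.
-/

/-- The Bregman divergence of the generalized entropy:
`V_x(y) = ∑ᵢ (yᵢ log(yᵢ/xᵢ) + xᵢ − yᵢ)` (with `0·log 0 = 0`, as `Real.log 0 = 0`). -/
noncomputable def bregmanV {n : ℕ} (x y : Fin n → ℝ) : ℝ :=
  ∑ i, (y i * Real.log (y i / x i) + x i - y i)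

open Real Set

lemma continuous_mul_log_div (a : ℝ) : Continuous fun s : ℝ ↦ s * log (s / a) := by
  rcases eq_or_ne a 0 with rfl | ha
  · simpa using continuous_const
  have h : (fun s : ℝ ↦ s * log (s / a)) = fun s ↦ a * (s / a * log (s / a)) := by
    ext s
    field_simp
  rw [h]
  exact continuous_const.mul (continuous_id.div_const a).mul_log

lemma hasDerivAt_mul_log_div {a s : ℝ} (ha : a ≠ 0) (hs : s ≠ 0) :
    HasDerivAt (fun s : ℝ ↦ s * log (s / a)) (log (s / a) + 1) s := by
  have h := ((hasDerivAt_id' s).div_const a).log (div_ne_zero hs ha)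
  refine ((hasDerivAt_id' s).mul h).congr_deriv ?_
  field_simp

lemma log_div_le_sub_div_of_le {a s M : ℝ} (hs : 0 < s) (hsa : s ≤ a) (haM : a ≤ M) :
    log (s / a) ≤ (s - a) / M := by
  have ha : 0 < a := hs.trans_le hsa
  calc log (s / a) ≤ s / a - 1 := log_le_sub_one_of_pos (div_pos hs ha)
    _ = (s - a) / a := by field_simp
    _ ≤ (s - a) / M := by
      rw [div_le_div_iff₀ ha (ha.trans_le haM)]
      nlinarith

lemma sub_div_le_log_div_of_le {a s M : ℝ} (ha : 0 < a) (has : a ≤ s) (hsM : s ≤ M) :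
    (s - a) / M ≤ log (s / a) := by
  have hs : 0 < s := ha.trans_le has
  calc (s - a) / M ≤ (s - a) / s := div_le_div_of_nonneg_left (by linarith) hs hsM
    _ = 1 - (s / a)⁻¹ := by field_simp
    _ ≤ log (s / a) := one_sub_inv_le_log_of_pos (div_pos hs ha)

theorem sq_sub_div_le_mul_log_div_add_sub {a b M : ℝ} (ha : 0 < a) (hb : 0 ≤ b)
    (haM : a ≤ M) (hbM : b ≤ M) :
    (a - b) ^ 2 / (2 * M) ≤ b * log (b / a) + a - b := by
  set gap : ℝ → ℝ := fun s ↦ s * log (s / a) + a - s - (a - s) ^ 2 / (2 * M) with hgap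
  have hcont : Continuous gap := by
    have := continuous_mul_log_div a
    fun_prop
  have hderiv : ∀ s, 0 < s → HasDerivAt gap (log (s / a) - (s - a) / M) s := by
    intro s hs
    have h := (((hasDerivAt_mul_log_div ha.ne' hs.ne').add_const a).sub (hasDerivAt_id' s)).sub
      ((((hasDerivAt_const s a).sub (hasDerivAt_id' s)).pow 2).div_const (2 * M))
    refine h.congr_deriv ?_
    simp only [Pi.sub_apply]
    field_simp
    ring
  have hdiff : ∀ {l r : ℝ}, 0 ≤ l → DifferentiableOn ℝ gap (interior (Icc l r)) := by
    intro l r hl s hs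
    rw [interior_Icc] at hs
    exact (hderiv s (hl.trans_lt hs.1)).differentiableAt.differentiableWithinAt
  suffices gap a ≤ gap b by simp only [hgap] at this; simpa using this
  rcases le_total b a with hba | hab
  · refine antitoneOn_of_deriv_nonpos (convex_Icc b a) hcont.continuousOn (hdiff hb) ?_
      (left_mem_Icc.2 hba) (right_mem_Icc.2 hba) hba
    rw [interior_Icc]
    rintro s ⟨hbs, hsa⟩
    have hs : 0 < s := hb.trans_lt hbs
    rw [(hderiv s hs).deriv, sub_nonpos]
    exact log_div_le_sub_div_of_le hs hsa.le haM
  · refine monotoneOn_of_deriv_nonneg (convex_Icc a b) hcont.continuousOn (hdiff ha.le) ?_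
      (left_mem_Icc.2 hab) (right_mem_Icc.2 hab) hab
    rw [interior_Icc]
    rintro s ⟨has, hsb⟩
    rw [(hderiv s (ha.trans has)).deriv, sub_nonneg]
    exact sub_div_le_log_div_of_le ha has.le (hsb.le.trans hbM)

/-- for `x > 0` and `y ≥ 0` entrywise,
`V_x(y) ≥ ∑ᵢ (xᵢ − yᵢ)²/(2 max{xᵢ, yᵢ})`. -/
theorem bregman_lower_bound (n : ℕ) (x y : Fin n → ℝ)
    (hx : ∀ i, 0 < x i) (hy : ∀ i, 0 ≤ y i) :
    (∑ i, (x i - y i) ^ 2 / (2 * max (x i) (y i))) ≤ bregmanV x y :=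
  Finset.sum_le_sum fun i _ ↦
    sq_sub_div_le_mul_log_div_add_sub (hx i) (hy i) (le_max_left _ _) (le_max_right _ _)
end

section
/- Let ε ∈ (0, 1/2], α ∈ (0, 1/10], and S ≥ 0. Let x ∈ ℝⁿ have all entries positive with ∑_{i=1}^n x_i ≤ (1 + ε)·S, let g ∈ ℝⁿ satisfy |g_i| ≤ 1 for every i, and define x′ ∈ ℝⁿ by x′_i = x_i·exp(−α g_i). Then for every u ∈ ℝⁿ with u ≥ 0: ⟨α g, x − u⟩ ≤ α²·S + V_x(u) − V_{x′}(u). -/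
namespace Real

theorem exp_le_one_add_add_two_thirds_mul_sq {s : ℝ} (hs : |s| ≤ 3 / 4) :
    exp s ≤ 1 + s + 2 / 3 * s ^ 2 := by
  have htaylor : |exp s - (1 + s + s ^ 2 / 2)| ≤ |s| ^ 3 * (2 / 9) := by
    have h := exp_bound (x := s) (by linarith) (n := 3) (by norm_num)
    norm_num [Finset.sum_range_succ, Nat.factorial] at h
    exact h
  have hcube : |s| ^ 3 * (2 / 9) ≤ s ^ 2 / 6 := by
    rw [← sq_abs s]
    nlinarith [abs_nonneg s, sq_nonneg |s|]
  linarith [(abs_le.mp htaylor).2]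

theorem mul_log_div_mul_exp_neg (u t : ℝ) {x : ℝ} (hx : x ≠ 0) :
    u * log (u / (x * exp (-t))) = u * log (u / x) + u * t := by
  rcases eq_or_ne u 0 with rfl | hu
  · simp
  · rw [div_mul_eq_div_div, log_div (div_ne_zero hu hx) (exp_ne_zero _), log_exp]
    ring

end Real

theorem bregmanV_sub_bregmanV_mul_exp_neg {n : ℕ} {x : Fin n → ℝ} (hx : ∀ i, x i ≠ 0)
    (t u : Fin n → ℝ) :
    bregmanV x u - bregmanV (fun i => x i * Real.exp (-t i)) u
      = ∑ i, (x i * (1 - Real.exp (-t i)) - u i * t i) := by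
  simp only [bregmanV, ← Finset.sum_sub_distrib, Real.mul_log_div_mul_exp_neg _ _ (hx _)]
  exact Finset.sum_congr rfl fun i _ => by ring

theorem mul_sub_one_add_exp_neg_le {x t a : ℝ} (hx : 0 ≤ x) (ht : |t| ≤ a) (ha : a ≤ 3 / 4) :
    x * (t - 1 + Real.exp (-t)) ≤ 2 / 3 * a ^ 2 * x := by
  have hexp := Real.exp_le_one_add_add_two_thirds_mul_sq (s := -t) (by rw [abs_neg]; linarith)
  have hsq : t ^ 2 ≤ a ^ 2 := sq_le_sq' (abs_le.mp ht).1 (abs_le.mp ht).2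
  nlinarith

/-- mirror descent guarantee. With `ε ∈ (0,1/2]`, `α ∈ (0,1/10]`, `S ≥ 0`,
`x > 0` entrywise with `∑ᵢ xᵢ ≤ (1 + ε)S`, `|gᵢ| ≤ 1` for all `i`, and `x′ᵢ = xᵢ exp(−α gᵢ)`,
for every `u ≥ 0`: `⟨α g, x − u⟩ ≤ α²S + V_x(u) − V_{x′}(u)`. -/
theorem mirror_descent_guarantee (n : ℕ)
    (ε : ℝ) (hε : ε ∈ Set.Ioc (0 : ℝ) (1 / 2))
    (α : ℝ) (hα : α ∈ Set.Ioc (0 : ℝ) (1 / 10))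
    (S : ℝ) (hS : 0 ≤ S)
    (x : Fin n → ℝ) (hx : ∀ i, 0 < x i) (hxsum : ∑ i, x i ≤ (1 + ε) * S)
    (g : Fin n → ℝ) (hg : ∀ i, |g i| ≤ 1) :
    ∀ u : Fin n → ℝ, (∀ i, 0 ≤ u i) →
      (∑ i, α * g i * (x i - u i))
        ≤ α ^ 2 * S + bregmanV x u - bregmanV (fun i => x i * Real.exp (-(α * g i))) u := by
  intro u _
  have hstep : ∀ i, |α * g i| ≤ α := fun i => by
    rw [abs_mul, abs_of_pos hα.1]
    exact mul_le_of_le_one_right hα.1.le (hg i)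
  have hterm : ∀ i, x i * (α * g i - 1 + Real.exp (-(α * g i))) ≤ 2 / 3 * α ^ 2 * x i :=
    fun i => mul_sub_one_add_exp_neg_le (hx i).le (hstep i) (by linarith [hα.2])
  rw [add_sub_assoc, bregmanV_sub_bregmanV_mul_exp_neg (fun i => (hx i).ne')]
  calc ∑ i, α * g i * (x i - u i)
      = ∑ i, x i * (α * g i - 1 + Real.exp (-(α * g i)))
          + ∑ i, (x i * (1 - Real.exp (-(α * g i))) - u i * (α * g i)) := by
        rw [← Finset.sum_add_distrib]
        exact Finset.sum_congr rfl fun i _ => by ring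
    _ ≤ 2 / 3 * α ^ 2 * ∑ i, x i
          + ∑ i, (x i * (1 - Real.exp (-(α * g i))) - u i * (α * g i)) := by
        rw [Finset.mul_sum]
        exact add_le_add_left (Finset.sum_le_sum fun i _ => hterm i) _
    _ ≤ α ^ 2 * S + ∑ i, (x i * (1 - Real.exp (-(α * g i))) - u i * (α * g i)) := by
        have hslack : 2 / 3 * (1 + ε) * S ≤ S := by nlinarith [hε.2]
        nlinarith [sq_nonneg α]
end

section
/- Let A be an m×n matrix with nonnegative real entries, n ≥ 2, such that ‖A_{:i}‖_∞ ≥ 1 for every column i, and let ε ∈ (0, 1/2]. Define x₀ ∈ ℝⁿ by x₀[i] = (1 − ε/2)/(n·‖A_{:i}‖_∞). Let u ∈ ℝⁿ satisfy u ≥ 0, Au ≤ 1, and ∑_i u_i ≤ opt, where opt ≥ 1. Then V_{x₀}(u) ≤ 2·log(2n)·opt. -/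
/-!
A feasible `u` satisfies `uᵢ ≤ 1 / ‖A_{:i}‖_∞`, so `uᵢ / x₀[i] ≤ n / (1 - ε/2) ≤ 2n`. Hence each
term of `V_{x₀}(u)` is at most `uᵢ log(2n) + x₀[i]`, and summing gives
`V_{x₀}(u) ≤ log(2n) · opt + ∑ᵢ x₀[i] ≤ log(2n) · opt + 1`. Since `2n ≥ 4 > e` and `opt ≥ 1`, the
additive `1` is absorbed by a second `log(2n) · opt`.
-/

open Finset Matrix

theorem Matrix.mul_le_mulVec_of_nonneg {ι κ R : Type*} [Fintype κ] [Semiring R] [PartialOrder R]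
    [IsOrderedRing R] {A : Matrix ι κ R} (hA : ∀ j i, 0 ≤ A j i) {u : κ → R}
    (hu : ∀ i, 0 ≤ u i) (j : ι) (i : κ) : A j i * u i ≤ (A *ᵥ u) j :=
  single_le_sum (f := fun k => A j k * u k) (fun k _ => mul_nonneg (hA j k) (hu k)) (mem_univ i)

theorem colMax_mul_le_one {m n : ℕ} (hm : 0 < m) {A : Matrix (Fin m) (Fin n) ℝ}
    (hA : ∀ j i, 0 ≤ A j i) {u : Fin n → ℝ} (hu : ∀ i, 0 ≤ u i) (hAu : ∀ j, (A *ᵥ u) j ≤ 1)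
    (i : Fin n) : colMax hm A i * u i ≤ 1 := by
  obtain ⟨j, -, hj⟩ := exists_mem_eq_sup' ⟨⟨0, hm⟩, mem_univ _⟩ fun j : Fin m => A j i
  rw [colMax, hj]
  exact (A.mul_le_mulVec_of_nonneg hA hu j i).trans (hAu j)

theorem bregmanV_le_of_le_mul {n : ℕ} {x y : Fin n → ℝ} {K : ℝ} (hx : ∀ i, 0 < x i)
    (hy : ∀ i, 0 ≤ y i) (hyx : ∀ i, y i ≤ K * x i) :
    bregmanV x y ≤ Real.log K * ∑ i, y i + ∑ i, x i := by
  rw [bregmanV, mul_sum, ← sum_add_distrib]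
  refine sum_le_sum fun i _ => ?_
  have hlog : y i * Real.log (y i / x i) ≤ y i * Real.log K := by
    rcases (hy i).eq_or_lt with h0 | hpos
    · simp [← h0]
    · exact mul_le_mul_of_nonneg_left
        (Real.log_le_log (div_pos hpos (hx i)) ((div_le_iff₀ (hx i)).2 (hyx i))) (hy i)
  linarith [hy i]

theorem one_le_log_of_three_le {t : ℝ} (ht : 3 ≤ t) : 1 ≤ Real.log t := by
  rw [Real.le_log_iff_exp_le (by linarith)]
  linarith [Real.exp_one_lt_three]

/-- with `n ≥ 2`, `‖A_{:i}‖_∞ ≥ 1` for all columns, `ε ∈ (0,1/2]`,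
`x₀[i] = (1 − ε/2)/(n‖A_{:i}‖_∞)`, and `u ≥ 0` with `Au ≤ 1` and `∑ᵢ uᵢ ≤ opt` where
`opt ≥ 1`: `V_{x₀}(u) ≤ 2 log(2n) opt`. -/
theorem bregman_initial_bound (m n : ℕ) (hm : 0 < m) (hn : 2 ≤ n)
    (A : Matrix (Fin m) (Fin n) ℝ) (hA : ∀ j i, 0 ≤ A j i)
    (hcol : ∀ i, 1 ≤ colMax hm A i)
    (ε : ℝ) (hε : ε ∈ Set.Ioc (0 : ℝ) (1 / 2))
    (u : Fin n → ℝ) (hu : ∀ i, 0 ≤ u i) (hufeas : ∀ j, A.mulVec u j ≤ 1)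
    (opt : ℝ) (hopt1 : 1 ≤ opt) (husum : ∑ i, u i ≤ opt) :
    bregmanV (fun i => (1 - ε / 2) / ((n : ℝ) * colMax hm A i)) u
      ≤ 2 * Real.log (2 * n) * opt := by
  obtain ⟨hε0, hε2⟩ := hε
  set c := colMax hm A
  set x : Fin n → ℝ := fun i => (1 - ε / 2) / ((n : ℝ) * c i)
  have hn' : (2 : ℝ) ≤ n := by exact_mod_cast hn
  have hc : ∀ i, 0 < c i := fun i => one_pos.trans_le (hcol i)
  have hx : ∀ i, 0 < x i := fun i => div_pos (by linarith) (mul_pos (by linarith) (hc i))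
  have hratio : ∀ i, u i ≤ (2 * n) * x i := fun i => by
    have hcu := colMax_mul_le_one hm hA hu hufeas i
    have : (2 * n) * x i = (2 - ε) / c i := by
      simp only [x]; field_simp
    rw [this, le_div_iff₀ (hc i)]
    nlinarith [hu i]
  have hxsum : ∑ i, x i ≤ 1 := by
    calc ∑ i, x i ≤ ∑ _i : Fin n, (1 / n : ℝ) := sum_le_sum fun i _ => by
          rw [div_le_div_iff₀ (mul_pos (by linarith) (hc i)) (by linarith)]
          nlinarith [hcol i]
      _ = 1 := by simp [field]
  have hlog : 1 ≤ Real.log (2 * n) := one_le_log_of_three_le (by linarith)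
  calc bregmanV x u ≤ Real.log (2 * n) * ∑ i, u i + ∑ i, x i := bregmanV_le_of_le_mul hx hu hratio
    _ ≤ Real.log (2 * n) * opt + 1 := by gcongr
    _ ≤ 2 * Real.log (2 * n) * opt := by nlinarith
end

section
/- Let A be an m×n matrix with nonnegative real entries such that every column has a positive maximum entry, and let ε ∈ (0, 1/10]. Let ȳ ∈ ℝᵐ with ȳ ≥ 0. For each i ∈ {1, …, n} let λ_i = (Aᵀȳ)_i − 1 + ε, and let j(i) be a row index with A_{j(i), i} = ‖A_{:i}‖_∞. Define ȳ′ = ȳ + ∑_{i : λ_i ≤ −2ε} (−λ_i / A_{j(i), i})·e_{j(i)}, where e_j denotes the j-th standard basis vector of ℝᵐ. Then ȳ′ ≥ 0 and (Aᵀȳ′)_i ≥ 1 − 3ε for every i; consequently y = ȳ′/(1 − 3ε) satisfies y ≥ 0 and Aᵀy ≥ 1. -/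
/-!
The column `i` with `λᵢ ≤ -2ε` receives `-λᵢ / A_{j(i),i}` on its pivot row `j(i)`, which by itself
lifts `(Aᵀȳ)ᵢ = 1 - ε + λᵢ` to `1 - ε`. Since `A ≥ 0`, no correction lowers the coverage of any
column, and the columns with `λᵢ > -2ε` are already covered to more than `1 - 3ε`.
-/

open Finset Matrix

theorem add_sum_single_nonneg {ι κ M : Type*} [DecidableEq ι] [AddCommMonoid M] [PartialOrder M]
    [IsOrderedAddMonoid M] {y : ι → M} (hy : 0 ≤ y) {s : Finset κ} {c : κ → M}
    (hc : ∀ k ∈ s, 0 ≤ c k) (r : κ → ι) : 0 ≤ y + ∑ k ∈ s, Pi.single (r k) (c k) :=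
  add_nonneg hy (sum_nonneg fun k hk => Pi.single_nonneg.2 (hc k hk))

section

variable {ι κ R : Type*} [Fintype ι] [DecidableEq ι] [CommSemiring R]

theorem add_sum_single_vecMul_apply (A : Matrix ι κ R) (y : ι → R) (s : Finset κ) (r : κ → ι)
    (c : κ → R) (i : κ) :
    ((y + ∑ k ∈ s, Pi.single (r k) (c k)) ᵥ* A) i = (y ᵥ* A) i + ∑ k ∈ s, c k * A (r k) i := by
  simp [add_vecMul, sum_vecMul, Finset.sum_apply]

variable [PartialOrder R] [IsOrderedRing R] {A : Matrix ι κ R} {s : Finset κ} {c : κ → R}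

theorem vecMul_apply_le_add_sum_single_vecMul_apply (hA : ∀ j i, 0 ≤ A j i)
    (hc : ∀ k ∈ s, 0 ≤ c k) (y : ι → R) (r : κ → ι) (i : κ) :
    (y ᵥ* A) i ≤ ((y + ∑ k ∈ s, Pi.single (r k) (c k)) ᵥ* A) i := by
  rw [add_sum_single_vecMul_apply]
  exact le_add_of_nonneg_right (sum_nonneg fun k hk => mul_nonneg (hc k hk) (hA _ _))

theorem vecMul_apply_add_le_add_sum_single_vecMul_apply (hA : ∀ j i, 0 ≤ A j i)
    (hc : ∀ k ∈ s, 0 ≤ c k) (y : ι → R) (r : κ → ι) {i : κ} (hi : i ∈ s) :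
    (y ᵥ* A) i + c i * A (r i) i ≤ ((y + ∑ k ∈ s, Pi.single (r k) (c k)) ᵥ* A) i := by
  rw [add_sum_single_vecMul_apply]
  gcongr
  exact single_le_sum (f := fun k => c k * A (r k) i) (fun k hk => mul_nonneg (hc k hk) (hA _ _)) hi

end

theorem mulVec_div_const_apply {ι κ K : Type*} [Fintype κ] [Field K] (A : Matrix ι κ K)
    (v : κ → K) (t : K) (i : ι) : (A *ᵥ fun j => v j / t) i = (A *ᵥ v) i / t := by
  simp only [mulVec, dotProduct, sum_div, mul_div_assoc]

theorem fixing_procedure_general (m n : ℕ) (hm : 0 < m)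
    (A : Matrix (Fin m) (Fin n) ℝ) (hA : ∀ j i, 0 ≤ A j i)
    (hcolpos : ∀ i, 0 < colMax hm A i)
    (ε : ℝ) (hε : ε ∈ Set.Ioc (0 : ℝ) (1 / 10))
    (ybar : Fin m → ℝ) (hybar : ∀ j, 0 ≤ ybar j)
    (lam : Fin n → ℝ) (hlam : ∀ i, lam i = A.transpose.mulVec ybar i - 1 + ε)
    (jfun : Fin n → Fin m) (hjfun : ∀ i, A (jfun i) i = colMax hm A i)
    (ybar' : Fin m → ℝ)
    (hybar' : ∀ j, ybar' j = ybar j +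
      ∑ i ∈ Finset.univ.filter (fun i : Fin n => lam i ≤ -(2 * ε)),
        (if j = jfun i then -lam i / A (jfun i) i else 0)) :
    (∀ j, 0 ≤ ybar' j) ∧
    (∀ i, 1 - 3 * ε ≤ A.transpose.mulVec ybar' i) ∧
    (∀ j, 0 ≤ ybar' j / (1 - 3 * ε)) ∧
    (∀ i, 1 ≤ A.transpose.mulVec (fun j => ybar' j / (1 - 3 * ε)) i) := by
  obtain ⟨hε0, hε1⟩ := hε
  set s := univ.filter fun i => lam i ≤ -(2 * ε)
  have hpivot : ∀ i, 0 < A (jfun i) i := fun i => hjfun i ▸ hcolpos i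
  have hstep : ∀ i ∈ s, 0 ≤ -lam i / A (jfun i) i := fun i hi =>
    div_nonneg (by linarith [(mem_filter.1 hi).2]) (hpivot i).le
  have hybar'_eq : ybar' = ybar + ∑ i ∈ s, Pi.single (jfun i) (-lam i / A (jfun i) i) := by
    ext j
    simp [hybar', Finset.sum_apply, Pi.single_apply]
  have hnonneg : ∀ j, 0 ≤ ybar' j := by
    rw [← Pi.le_def, hybar'_eq]
    exact add_sum_single_nonneg hybar hstep jfun
  have hcover : ∀ i, 1 - 3 * ε ≤ A.transpose.mulVec ybar' i := by
    intro i
    rw [mulVec_transpose, hybar'_eq]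
    have hAy := hlam i
    rw [mulVec_transpose] at hAy
    by_cases hi : i ∈ s
    · have hlift := vecMul_apply_add_le_add_sum_single_vecMul_apply hA hstep ybar jfun hi
      rw [div_mul_cancel₀ _ (hpivot i).ne'] at hlift
      linarith
    · have hmono := vecMul_apply_le_add_sum_single_vecMul_apply hA hstep ybar jfun i
      have hlam_gt : -(2 * ε) < lam i := by simpa [s] using hi
      linarith
  have hpos : 0 < 1 - 3 * ε := by linarith
  refine ⟨hnonneg, hcover, fun j => div_nonneg (hnonneg j) hpos.le, fun i => ?_⟩
  rw [mulVec_div_const_apply, one_le_div hpos]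
  exact hcover i

/-- correctness of the feasibility-fixing procedure for the covering LP.
With every column max positive, `ε ∈ (0,1/10]`, `ȳ ≥ 0`, `λᵢ = (Aᵀȳ)ᵢ − 1 + ε`, `j(i)` a row
achieving the column max, and `ȳ′ = ȳ + ∑_{i : λᵢ ≤ −2ε} (−λᵢ/A_{j(i),i})·e_{j(i)}`, one has
`ȳ′ ≥ 0`, `(Aᵀȳ′)ᵢ ≥ 1 − 3ε` for all `i`, and `y = ȳ′/(1 − 3ε)` satisfies `y ≥ 0`, `Aᵀy ≥ 1`. -/
theorem fixing_procedure (m n : ℕ) (hm : 0 < m) (hn : 0 < n)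
    (A : Matrix (Fin m) (Fin n) ℝ) (hA : ∀ j i, 0 ≤ A j i)
    (hcolpos : ∀ i, 0 < colMax hm A i)
    (ε : ℝ) (hε : ε ∈ Set.Ioc (0 : ℝ) (1 / 10))
    (ybar : Fin m → ℝ) (hybar : ∀ j, 0 ≤ ybar j)
    (lam : Fin n → ℝ) (hlam : ∀ i, lam i = A.transpose.mulVec ybar i - 1 + ε)
    (jfun : Fin n → Fin m) (hjfun : ∀ i, A (jfun i) i = colMax hm A i)
    (ybar' : Fin m → ℝ)
    (hybar' : ∀ j, ybar' j = ybar j +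
      ∑ i ∈ Finset.univ.filter (fun i : Fin n => lam i ≤ -(2 * ε)),
        (if j = jfun i then -lam i / A (jfun i) i else 0)) :
    (∀ j, 0 ≤ ybar' j) ∧
    (∀ i, 1 - 3 * ε ≤ A.transpose.mulVec ybar' i) ∧
    (∀ j, 0 ≤ ybar' j / (1 - 3 * ε)) ∧
    (∀ i, 1 ≤ A.transpose.mulVec (fun j => ybar' j / (1 - 3 * ε)) i) :=
  fixing_procedure_general m n hm A hA hcolpos ε hε ybar hybar lam hlam jfun hjfun ybar' hybar'
end
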